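/- arXiv:1407.2197 — 2 statements merged into one kernel-verified Lean document; each statement's English description precedes it below -/
import Mathlib

section
/- Fix integers d ≥ 2 and y₀ with 0 ≤ y₀ ≤ d − 2, and let σ be the circular Pascal array of order d with initial offset y₀. For every n ≥ 0, the entry σ_{n,⌊(n+y₀+d)/2⌋} is a minimum value of the n-th row; that is, σ_{n,⌊(n+y₀+d)/2⌋} ≤ σ_{n,k} for every k ∈ ℤ. -/
/-- Binomial coefficient `C(n,x)` with integer lower argument, zero when `x < 0` or `x > n`. -/
noncomputable def binomZ (n : ℕ) (x : ℤ) : ℕ := if 0 ≤ x then n.choose x.toNat else 0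

/-- Circular Pascal array of order `d` with initial offset `y0`:
`σ_{n,k} = Σ_{i=0}^{y0} Σ_{j∈ℤ} C(n, k − i + d·j)`. -/
noncomputable def circPascal (d y0 n : ℕ) (k : ℤ) : ℕ :=
  ∑ i ∈ Finset.range (y0 + 1), ∑ᶠ j : ℤ, binomZ n (k - i + d * j)

lemma binomZ_ne_zero {n : ℕ} {x : ℤ} (h : binomZ n x ≠ 0) : 0 ≤ x ∧ x ≤ n := by
  unfold binomZ at h
  split at h
  · rename_i hx
    refine ⟨hx, ?_⟩
    by_contra hc
    push_neg at hc
    have : n < x.toNat := by omega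
    simp [Nat.choose_eq_zero_of_lt this] at h
  · simp at h

lemma binomZ_succ (n : ℕ) (x : ℤ) : binomZ (n + 1) x = binomZ n x + binomZ n (x - 1) := by
  unfold binomZ
  rcases lt_trichotomy x 0 with h | h | h
  · rw [if_neg (by omega), if_neg (by omega), if_neg (by omega)]
  · subst h; simp
  · rw [if_pos (by omega), if_pos (by omega), if_pos (by omega)]
    have hx : x.toNat = (x - 1).toNat + 1 := by omega
    rw [hx, Nat.choose_succ_succ']
    omega

lemma binomZ_symm (n : ℕ) (x : ℤ) : binomZ n ((n : ℤ) - x) = binomZ n x := by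
  unfold binomZ
  split_ifs with h1 h2 h2
  · have h3 : ((n:ℤ) - x).toNat = n - x.toNat := by omega
    rw [h3, Nat.choose_symm (by omega)]
  · have h3 : n < ((n:ℤ) - x).toNat := by omega
    simp [Nat.choose_eq_zero_of_lt h3]
  · have h3 : n < x.toNat := by omega
    simp [Nat.choose_eq_zero_of_lt h3]
  · rfl

lemma support_finite (d n : ℕ) (hd : 1 ≤ d) (a : ℤ) :
    (Function.support fun j : ℤ => binomZ n (a + d * j)).Finite := by
  apply Set.Finite.subset (Set.finite_Icc (-(|a| + n)) (|a| + n))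
  intro j hj
  have h := binomZ_ne_zero hj
  simp only [Set.mem_Icc]
  have hdj : -(|a| + n) ≤ d * j ∧ d * j ≤ |a| + n := by
    constructor
    · nlinarith [abs_nonneg a, le_abs_self a, neg_abs_le a]
    · nlinarith [abs_nonneg a, le_abs_self a, neg_abs_le a]
  have hd1 : (1 : ℤ) ≤ d := by exact_mod_cast hd
  constructor
  · nlinarith [hdj.1, hdj.2]
  · nlinarith [hdj.1, hdj.2]

lemma finsum_shift (n : ℕ) (d : ℤ) (a t : ℤ) :
    ∑ᶠ j : ℤ, binomZ n (a + d * t + d * j) = ∑ᶠ j : ℤ, binomZ n (a + d * j) := by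
  have h := finsum_comp_equiv (Equiv.addRight t) (f := fun j : ℤ => binomZ n (a + d * j))
  rw [← h]
  apply finsum_congr
  intro j
  show binomZ n (a + d * t + d * j) = binomZ n (a + d * (j + t))
  congr 1
  ring

lemma finsum_neg (n : ℕ) (d : ℤ) (a : ℤ) :
    ∑ᶠ j : ℤ, binomZ n (a + d * (-j)) = ∑ᶠ j : ℤ, binomZ n (a + d * j) := by
  exact finsum_comp_equiv (Equiv.neg ℤ) (f := fun j : ℤ => binomZ n (a + d * j))

lemma circPascal_period (d y0 n : ℕ) (k t : ℤ) :
    circPascal d y0 n (k + d * t) = circPascal d y0 n k := by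
  unfold circPascal
  apply Finset.sum_congr rfl
  intro i _
  have h1 : ∀ j : ℤ, k + d * t - i + d * j = (k - i) + d * t + d * j := by intro j; ring
  simp_rw [h1, finsum_shift]

lemma circPascal_symm (d y0 n : ℕ) (k : ℤ) :
    circPascal d y0 n ((n : ℤ) + y0 - k) = circPascal d y0 n k := by
  unfold circPascal
  rw [← Finset.sum_range_reflect]
  apply Finset.sum_congr rfl
  intro i hi
  simp only [Finset.mem_range] at hi
  rw [← finsum_neg n d (k - i)]
  apply finsum_congr
  intro j
  have hc : ((y0 + 1 - 1 - i : ℕ) : ℤ) = (y0 : ℤ) - i := by omega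
  have h1 : (n : ℤ) + y0 - k - ((y0 + 1 - 1 - i : ℕ) : ℤ) + d * j
      = (n : ℤ) - (k - i + d * (-j)) := by rw [hc]; ring
  rw [h1, binomZ_symm]

lemma circPascal_succ (d y0 n : ℕ) (hd : 1 ≤ d) (k : ℤ) :
    circPascal d y0 (n + 1) k = circPascal d y0 n k + circPascal d y0 n (k - 1) := by
  unfold circPascal
  rw [← Finset.sum_add_distrib]
  apply Finset.sum_congr rfl
  intro i _
  have h1 : ∀ j : ℤ, binomZ (n + 1) (k - i + d * j)
      = binomZ n (k - i + d * j) + binomZ n (k - 1 - i + d * j) := by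
    intro j
    rw [binomZ_succ]
    congr 2
    ring
  simp_rw [h1]
  rw [finsum_add_distrib (support_finite d n hd (k - i)) (support_finite d n hd (k - 1 - i))]

lemma binomZ_zero_left (x : ℤ) : binomZ 0 x = if x = 0 then 1 else 0 := by
  unfold binomZ
  split_ifs with h1 h2 h2
  · subst h2; rfl
  · have : 0 < x.toNat := by omega
    exact Nat.choose_eq_zero_of_lt this
  · omega
  · rfl

lemma finsum_delta (d : ℕ) (hd : 1 ≤ d) (a : ℤ) :
    ∑ᶠ j : ℤ, binomZ 0 (a + d * j) = if (d : ℤ) ∣ a then 1 else 0 := by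
  split_ifs with hdvd
  · obtain ⟨t, ht⟩ := hdvd
    rw [finsum_eq_single _ (-t)]
    · rw [binomZ_zero_left, if_pos (by rw [ht]; ring)]
    · intro x hx
      rw [binomZ_zero_left, if_neg]
      intro hc
      apply hx
      have h2 : (d : ℤ) * (x + t) = 0 := by rw [mul_add]; linarith
      have hd0 : (d : ℤ) ≠ 0 := by positivity
      rcases mul_eq_zero.mp h2 with h | h
      · exact absurd h hd0
      · linarith
  · apply finsum_eq_zero_of_forall_eq_zero
    intro x
    rw [binomZ_zero_left, if_neg]
    intro hc
    exact hdvd ⟨-x, by rw [mul_neg]; linarith⟩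

lemma circPascal_zero (d y0 : ℕ) (hd : 2 ≤ d) (hy : y0 ≤ d - 2) (k : ℤ)
    (h0 : 0 ≤ k) (h1 : k < d) :
    circPascal d y0 0 k = if k ≤ y0 then 1 else 0 := by
  unfold circPascal
  have hterm : ∀ i ∈ Finset.range (y0 + 1),
      (∑ᶠ j : ℤ, binomZ 0 (k - i + d * j)) = if i = k.toNat then 1 else 0 := by
    intro i hi
    simp only [Finset.mem_range] at hi
    rw [finsum_delta d (by omega) (k - i)]
    apply if_congr _ rfl rfl
    have hd2 : (2 : ℤ) ≤ d := by exact_mod_cast hd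
    have hiy : (i : ℤ) ≤ (d : ℤ) - 2 := by omega
    constructor
    · rintro ⟨t, ht⟩
      have hlow : -(d : ℤ) < d * t := by linarith
      have hhigh : (d : ℤ) * t < d := by linarith
      have ht0 : t = 0 := by
        by_contra hne
        rcases lt_or_gt_of_ne hne with hlt | hgt
        · have h3 : (d : ℤ) * t ≤ d * (-1) :=
            mul_le_mul_of_nonneg_left (by omega) (by positivity)
          rw [mul_neg_one] at h3
          linarith
        · have h3 : (d : ℤ) * 1 ≤ d * t :=
            mul_le_mul_of_nonneg_left (by omega) (by positivity)
          rw [mul_one] at h3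
          linarith
      subst ht0
      rw [mul_zero] at ht
      omega
    · intro h
      refine ⟨0, by rw [mul_zero]; omega⟩
  rw [Finset.sum_congr rfl hterm, Finset.sum_ite_eq' (Finset.range (y0 + 1)) k.toNat fun _ => 1]
  simp only [Finset.mem_range]
  split_ifs <;> omega

lemma circPascal_inv (d y0 : ℕ) (hd : 2 ≤ d) (hy : y0 ≤ d - 2) (n : ℕ) :
    ∀ k : ℤ, (n : ℤ) + y0 ≤ 2 * k → 2 * k < (n : ℤ) + y0 + d →
      circPascal d y0 n (k + 1) ≤ circPascal d y0 n k := by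
  induction n with
  | zero =>
    intro k hk1 hk2
    simp only [Nat.cast_zero, zero_add] at hk1 hk2
    have hb1 : 0 ≤ k := by omega
    have hb2 : k + 1 < d := by omega
    rw [circPascal_zero d y0 hd hy k hb1 (by omega),
      circPascal_zero d y0 hd hy (k + 1) (by omega) hb2]
    split_ifs <;> omega
  | succ n ih =>
    intro k hk1 hk2
    push_cast at hk1 hk2
    have key : circPascal d y0 n (k + 1) ≤ circPascal d y0 n (k - 1) := by
      by_cases hA : 2 * k = (n : ℤ) + y0 + d
      · -- antipodal point: equality via symmetry and periodicity
        apply le_of_eq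
        have e1 : (n : ℤ) + y0 - (k + 1) = (k - 1) + d * (-1) := by omega
        calc circPascal d y0 n (k + 1)
            = circPascal d y0 n ((n : ℤ) + y0 - (k + 1)) :=
              (circPascal_symm d y0 n (k + 1)).symm
          _ = circPascal d y0 n ((k - 1) + d * (-1)) := by rw [e1]
          _ = circPascal d y0 n (k - 1) := circPascal_period d y0 n (k - 1) (-1)
      · by_cases hB : 2 * k = (n : ℤ) + y0 + 1
        · have e1 : (n : ℤ) + y0 - (k - 1) = k := by omega
          have e2 : circPascal d y0 n k = circPascal d y0 n (k - 1) := by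
            calc circPascal d y0 n k
                = circPascal d y0 n ((n : ℤ) + y0 - (k - 1)) := by rw [e1]
              _ = circPascal d y0 n (k - 1) := circPascal_symm d y0 n (k - 1)
          calc circPascal d y0 n (k + 1) ≤ circPascal d y0 n k :=
                ih k (by omega) (by omega)
            _ = circPascal d y0 n (k - 1) := e2
        · have s1 : circPascal d y0 n (k + 1) ≤ circPascal d y0 n k :=
            ih k (by omega) (by omega)
          have s2 : circPascal d y0 n ((k - 1) + 1) ≤ circPascal d y0 n (k - 1) :=
            ih (k - 1) (by omega) (by omega)
          have e3 : (k - 1) + 1 = k := by ring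
          rw [e3] at s2
          omega
    rw [circPascal_succ d y0 n (by omega) (k + 1), circPascal_succ d y0 n (by omega) k]
    have e4 : k + 1 - 1 = k := by ring
    rw [e4]
    omega

lemma circPascal_chain (d y0 : ℕ) (hd : 2 ≤ d) (hy : y0 ≤ d - 2) (n : ℕ) :
    ∀ (s : ℕ) (j : ℤ), (n : ℤ) + y0 ≤ 2 * j → 2 * (j + s) ≤ (n : ℤ) + y0 + d →
      circPascal d y0 n (j + s) ≤ circPascal d y0 n j := by
  intro s
  induction s with
  | zero => intro j _ _; simp
  | succ s ihs =>
    intro j hj hs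
    push_cast at hs
    have h1 : circPascal d y0 n ((j + s) + 1) ≤ circPascal d y0 n (j + s) :=
      circPascal_inv d y0 hd hy n (j + s) (by omega) (by omega)
    have e1 : j + ((s : ℤ) + 1) = (j + s) + 1 := by ring
    calc circPascal d y0 n (j + ((s + 1 : ℕ) : ℤ))
        = circPascal d y0 n ((j + s) + 1) := by push_cast; rw [e1]
      _ ≤ circPascal d y0 n (j + s) := h1
      _ ≤ circPascal d y0 n j := ihs j hj (by omega)

/-- `σ_{n,⌊(n+y₀+d)/2⌋}` is a minimum value of row `n` of the circular Pascal array of order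
`d` with initial offset `y₀`. -/
theorem circPascal_min_le (d y0 : ℕ) (hd : 2 ≤ d) (hy : y0 ≤ d - 2) (n : ℕ) (k : ℤ) :
    circPascal d y0 n (((n + y0 + d) / 2 : ℕ) : ℤ) ≤ circPascal d y0 n k := by
  set m : ℤ := (((n + y0 + d) / 2 : ℕ) : ℤ) with hm
  have hm1 : 2 * m ≤ (n : ℤ) + y0 + d := by omega
  have hm2 : (n : ℤ) + y0 + d ≤ 2 * m + 1 := by omega
  set lo : ℤ := (((n + y0 + 1) / 2 : ℕ) : ℤ) with hlo
  have hlo1 : (n : ℤ) + y0 ≤ 2 * lo := by omega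
  have hlo2 : 2 * lo ≤ (n : ℤ) + y0 + 1 := by omega
  set r : ℤ := (k - lo) % d with hr
  have hr0 : 0 ≤ r := Int.emod_nonneg _ (by omega)
  have hrd : r < d := Int.emod_lt_of_pos _ (by omega)
  have hq : (d : ℤ) * ((k - lo) / d) + r = k - lo := Int.mul_ediv_add_emod _ _
  have hjeq : lo + r = k + (d : ℤ) * (-((k - lo) / d)) := by rw [mul_neg]; linarith
  have hfj : circPascal d y0 n (lo + r) = circPascal d y0 n k := by
    rw [hjeq]; exact circPascal_period d y0 n k (-((k - lo) / d))
  rw [← hfj]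
  by_cases hcase : 2 * (lo + r) ≤ (n : ℤ) + y0 + d
  · have hs : lo + r + (((m - (lo + r)).toNat : ℤ)) = m := by omega
    have hc := circPascal_chain d y0 hd hy n (m - (lo + r)).toNat (lo + r) (by omega) (by omega)
    rw [hs] at hc
    exact hc
  · have hsym : circPascal d y0 n ((n : ℤ) + y0 + d - (lo + r)) = circPascal d y0 n (lo + r) := by
      have e1 : (n : ℤ) + y0 - ((n : ℤ) + y0 + d - (lo + r)) = (lo + r) + d * (-1) := by ring
      calc circPascal d y0 n ((n : ℤ) + y0 + d - (lo + r))
          = circPascal d y0 n ((n : ℤ) + y0 - ((n : ℤ) + y0 + d - (lo + r))) :=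
            (circPascal_symm d y0 n _).symm
        _ = circPascal d y0 n ((lo + r) + d * (-1)) := by rw [e1]
        _ = circPascal d y0 n (lo + r) := circPascal_period d y0 n (lo + r) (-1)
    rw [← hsym]
    set j' : ℤ := (n : ℤ) + y0 + d - (lo + r) with hj'
    have hs : j' + ((m - j').toNat : ℤ) = m := by omega
    have hc := circPascal_chain d y0 hd hy n (m - j').toNat j' (by omega) (by omega)
    rw [hs] at hc
    exact hc
end

section
/- For every integer n ≥ 0, the number of sequences (r_1,…,r_n) with each r_i ∈ {−1,+1} such that r_1 + ⋯ + r_j ≥ 0 for every 1 ≤ j ≤ n equals the central binomial coefficient C(n, ⌊n/2⌋). -/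
/-- Walks of length `n` with steps `±1` whose partial sums stay `≥ -h`. -/
def NNWalk (n h : ℕ) : Type :=
  {r : Fin n → ℤ // (∀ i, r i = 1 ∨ r i = -1) ∧
      ∀ j : Fin n, -(h : ℤ) ≤ ∑ i ∈ Finset.Iic j, r i}

instance NNWalk.finite (n h : ℕ) : Finite (NNWalk n h) := by
  apply Finite.of_injective (fun r : NNWalk n h => fun i => decide (r.1 i = 1))
  intro r s hrs
  apply Subtype.ext
  funext i
  have h1 := congrFun hrs i
  simp only [decide_eq_decide] at h1
  rcases r.2.1 i with h2 | h2 <;> rcases s.2.1 i with h3 | h3 <;> omega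

lemma sum_Iic_zero {n : ℕ} (r : Fin (n+1) → ℤ) :
    ∑ i ∈ Finset.Iic (0 : Fin (n+1)), r i = r 0 := by
  have : Finset.Iic (0 : Fin (n+1)) = {0} := by ext i; simp [Fin.le_zero_iff]
  rw [this, Finset.sum_singleton]

lemma sum_Iic_succ {n : ℕ} (j : Fin n) (r : Fin (n+1) → ℤ) :
    ∑ i ∈ Finset.Iic (Fin.succ j), r i = r 0 + ∑ i ∈ Finset.Iic j, r (Fin.succ i) := by
  have h : Finset.Iic (Fin.succ j) = insert 0 ((Finset.Iic j).map (Fin.succEmb n)) := by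
    ext i
    induction i using Fin.cases <;>
      simp [Fin.succ_le_succ_iff, (Fin.succ_ne_zero _)]
  rw [h, Finset.sum_insert (by simp [Fin.succ_ne_zero]), Finset.sum_map]
  rfl

/-- Appending a first step. -/
lemma cons_mem {n h : ℕ} (a : ℤ) (ha : a = 1 ∨ a = -1) (hfloor : -(h:ℤ) ≤ a)
    (s : Fin n → ℤ) (hs : ∀ i, s i = 1 ∨ s i = -1)
    (hsum : ∀ j : Fin n, -(h:ℤ) - a ≤ ∑ i ∈ Finset.Iic j, s i) :
    (∀ i, (Fin.cons a s : Fin (n+1) → ℤ) i = 1 ∨ (Fin.cons a s : Fin (n+1) → ℤ) i = -1) ∧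
      ∀ j : Fin (n+1), -(h:ℤ) ≤ ∑ i ∈ Finset.Iic j, (Fin.cons a s : Fin (n+1) → ℤ) i := by
  constructor
  · intro i
    induction i using Fin.cases with
    | zero => simpa using ha
    | succ i => simpa using hs i
  · intro j
    induction j using Fin.cases with
    | zero => rw [sum_Iic_zero]; simpa using hfloor
    | succ j =>
        rw [sum_Iic_succ]
        have := hsum j
        simp only [Fin.cons_zero, Fin.cons_succ]
        linarith

/-- Peel the first step of a walk with positive floor. -/
def NNWalk.equivSucc (n h : ℕ) :
    NNWalk (n+1) (h+1) ≃ NNWalk n (h+2) ⊕ NNWalk n h where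
  toFun r :=
    if h1 : r.1 0 = 1 then
      Sum.inl ⟨Fin.tail r.1, by
        constructor
        · intro i; exact r.2.1 i.succ
        · intro j
          have := r.2.2 j.succ
          rw [sum_Iic_succ] at this
          unfold Fin.tail
          push_cast
          push_cast at this
          linarith [h1]⟩
    else
      Sum.inr ⟨Fin.tail r.1, by
        have h2 : r.1 0 = -1 := (r.2.1 0).resolve_left h1
        constructor
        · intro i; exact r.2.1 i.succ
        · intro j
          have := r.2.2 j.succ
          rw [sum_Iic_succ] at this
          unfold Fin.tail
          push_cast
          push_cast at this
          linarith [h2]⟩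
  invFun s :=
    match s with
    | Sum.inl s => ⟨Fin.cons 1 s.1, by
        refine cons_mem 1 (Or.inl rfl) (by push_cast; linarith) s.1 s.2.1 ?_
        intro j
        have := s.2.2 j
        push_cast at this ⊢
        linarith⟩
    | Sum.inr s => ⟨Fin.cons (-1) s.1, by
        refine cons_mem (-1) (Or.inr rfl) (by push_cast; linarith) s.1 s.2.1 ?_
        intro j
        have := s.2.2 j
        push_cast at this ⊢
        linarith⟩
  left_inv r := by
    by_cases h1 : r.1 0 = 1
    · simp only [h1, dif_pos]
      apply Subtype.ext
      simpa [← h1] using Fin.cons_self_tail r.1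
    · have h2 : r.1 0 = -1 := (r.2.1 0).resolve_left h1
      simp only [h1, dif_neg, not_false_iff]
      apply Subtype.ext
      simpa [← h2] using Fin.cons_self_tail r.1
  right_inv s := by
    match s with
    | Sum.inl s =>
        simp only [Fin.cons_zero, dif_pos]
        congr 1
    | Sum.inr s =>
        have : (Fin.cons (-1) s.1 : Fin (n+1) → ℤ) 0 ≠ 1 := by simp
        simp only [this, dif_neg, not_false_iff]
        congr 1

/-- Peel the first step of a walk with floor `0`: the first step must be up. -/
def NNWalk.equivZero (n : ℕ) : NNWalk (n+1) 0 ≃ NNWalk n 1 where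
  toFun r := ⟨Fin.tail r.1, by
    have h1 : r.1 0 = 1 := by
      have := r.2.2 0
      rw [sum_Iic_zero] at this
      rcases r.2.1 0 with h | h
      · exact h
      · push_cast at this; linarith [h ▸ this]
    constructor
    · intro i; exact r.2.1 i.succ
    · intro j
      have := r.2.2 j.succ
      rw [sum_Iic_succ] at this
      unfold Fin.tail
      push_cast
      push_cast at this
      linarith [h1]⟩
  invFun s := ⟨Fin.cons 1 s.1, by
    refine cons_mem 1 (Or.inl rfl) (by norm_num) s.1 s.2.1 ?_
    intro j
    have := s.2.2 j
    push_cast at this ⊢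
    linarith⟩
  left_inv r := by
    have h1 : r.1 0 = 1 := by
      have := r.2.2 0
      rw [sum_Iic_zero] at this
      rcases r.2.1 0 with h | h
      · exact h
      · push_cast at this; linarith [h ▸ this]
    apply Subtype.ext
    simpa [← h1] using Fin.cons_self_tail r.1
  right_inv s := by
    apply Subtype.ext
    simp

instance NNWalk.unique (h : ℕ) : Unique (NNWalk 0 h) where
  default := ⟨fun i => i.elim0, fun i => i.elim0, fun j => j.elim0⟩
  uniq r := by apply Subtype.ext; funext i; exact i.elim0

/-- The counting function. -/
def Fcount (n h : ℕ) : ℕ := ∑ i ∈ Finset.range (h+1), n.choose ((n+i+1)/2)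

lemma choose_half_symm (n : ℕ) : n.choose ((n+1)/2) = n.choose (n/2) := by
  rw [← Nat.choose_symm (by omega : (n+1)/2 ≤ n)]
  congr 1
  omega

lemma Fcount_zero (h : ℕ) : Fcount 0 h = 1 := by
  unfold Fcount
  rw [Finset.sum_range_succ']
  have h1 : ∑ i ∈ Finset.range h, Nat.choose 0 ((0+(i+1)+1)/2) = 0 := by
    apply Finset.sum_eq_zero
    intro i _
    exact Nat.choose_eq_zero_of_lt (by omega)
  rw [h1]
  norm_num

lemma Fcount_succ_zero (n : ℕ) : Fcount (n+1) 0 = Fcount n 1 := by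
  have e1 : Fcount (n+1) 0 = (n+1).choose (n/2+1) := by
    unfold Fcount
    rw [Finset.sum_range_one]
    congr 1
    omega
  have e2 : Fcount n 1 = n.choose ((n+1)/2) + n.choose (n/2+1) := by
    unfold Fcount
    rw [Finset.sum_range_succ, Finset.sum_range_one]
    congr 2 <;> omega
  have e4 := Nat.choose_succ_succ' n (n/2)
  have e5 := choose_half_symm n
  omega

lemma Fcount_succ_succ (n h : ℕ) : Fcount (n+1) (h+1) = Fcount n (h+2) + Fcount n h := by
  have hP : ∀ i : ℕ, (n+1).choose ((n+1+i+1)/2)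
      = n.choose ((n+i+2)/2) + n.choose ((n+i)/2) := by
    intro i
    have h1 : (n+1+i+1)/2 = (n+i)/2 + 1 := by omega
    have h2 : (n+i+2)/2 = (n+i)/2 + 1 := by omega
    rw [h1, h2, Nat.choose_succ_succ']
    omega
  have hL : Fcount (n+1) (h+1)
      = (∑ i ∈ Finset.range (h+2), n.choose ((n+i+2)/2))
        + ∑ i ∈ Finset.range (h+2), n.choose ((n+i)/2) := by
    unfold Fcount
    rw [← Finset.sum_add_distrib]
    exact Finset.sum_congr rfl fun i _ => hP i
  have hA : Fcount n (h+2)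
      = n.choose ((n+1)/2) + ∑ i ∈ Finset.range (h+2), n.choose ((n+i+2)/2) := by
    unfold Fcount
    rw [Finset.sum_range_succ']
    have : ∀ i : ℕ, n.choose ((n+(i+1)+1)/2) = n.choose ((n+i+2)/2) := by
      intro i; congr 1 <;> omega
    rw [Finset.sum_congr rfl fun i _ => this i]
    have : (n+0+1)/2 = (n+1)/2 := by omega
    rw [this]
    omega
  have hB : (∑ i ∈ Finset.range (h+2), n.choose ((n+i)/2))
      = n.choose (n/2) + Fcount n h := by
    rw [Finset.sum_range_succ']
    have : ∀ i : ℕ, n.choose ((n+(i+1))/2) = n.choose ((n+i+1)/2) := by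
      intro i; congr 1 <;> omega
    rw [Finset.sum_congr rfl fun i _ => this i]
    have : (n+0)/2 = n/2 := by omega
    rw [this]
    unfold Fcount
    omega
  have hs := choose_half_symm n
  omega

lemma NNWalk.card (n : ℕ) : ∀ h : ℕ, Nat.card (NNWalk n h) = Fcount n h := by
  induction n with
  | zero =>
      intro h
      rw [Nat.card_unique, Fcount_zero]
  | succ n ih =>
      intro h
      match h with
      | 0 =>
          rw [Nat.card_congr (NNWalk.equivZero n), ih 1, Fcount_succ_zero]
      | h + 1 =>
          rw [Nat.card_congr (NNWalk.equivSucc n h), Nat.card_sum, ih (h+2), ih h,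
            Fcount_succ_succ]

/-- The number of ±1 sequences of length `n` with all partial sums nonnegative equals the
central binomial coefficient `C(n, ⌊n/2⌋)`. -/
theorem nonneg_walks_eq_central_binom (n : ℕ) :
    Nat.card {r : Fin n → ℤ // (∀ i, r i = 1 ∨ r i = -1) ∧
        ∀ j : Fin n, 0 ≤ ∑ i ∈ Finset.Iic j, r i} =
      n.choose (n / 2) := by
  have e : {r : Fin n → ℤ // (∀ i, r i = 1 ∨ r i = -1) ∧
      ∀ j : Fin n, 0 ≤ ∑ i ∈ Finset.Iic j, r i} ≃ NNWalk n 0 := by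
    apply Equiv.subtypeEquivRight
    intro r
    simp
  rw [Nat.card_congr e, NNWalk.card n 0]
  unfold Fcount
  rw [Finset.sum_range_one]
  have : (n+0+1)/2 = (n+1)/2 := by omega
  rw [this, choose_half_symm]
end
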